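/- arXiv:1203.6736 — 2 statements merged into one kernel-verified Lean document; each statement's English description precedes it below -/
import Mathlib

section
/- Define polynomials a_{n,k}(q) by the recurrence a_{n,k}(q) = [k]_q a_{n-1,k}(q) + (1+q^{k-1}) q^{k-1} [n+2-2k]_q a_{n-1,k-1}(q) for n ≥ 2 and 1 ≤ k ≤ ⌊(n+1)/2⌋, with a_{1,1}(q) = 1 and a_{n,k}(q) = 0 for k ≤ 0 or k > ⌊(n+1)/2⌋. Then Carlitz's q-Eulerian polynomials satisfy A_n(t,q) = sum_{k=1}^{⌊(n+1)/2⌋} a_{n,k}(q) t^{k-1} (-tq^k; q)_{n+1-2k}. -/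
/-!
Both sides satisfy the same first-order recurrence in `n`. Since
`(1 - q) [j+1]_q^{n+1} = [j+1]_q^n - q · q^j [j+1]_q^n` and
`(t;q)_{n+2} = (t;q)_{n+1} (1 - q^{n+1} t) = (1 - t) (qt;q)_{n+1}`, the series
`A_n(t) = (t;q)_{n+1} ∑_j [j+1]_q^n t^j` satisfies
`(1 - q) A_{n+1}(t) = (1 - q^{n+1} t) A_n(t) - q (1 - t) A_n(qt)`.
Applying the recurrence of `a_{n,k}` to the gamma sum for `n + 1` and shifting the index of the
`a_{n,k-1}` part, the same relation reduces, coefficient by coefficient of `a_{n,k}`, to a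
three-term identity between the products `(-tq^k;q)_m`. Both sides equal `1` at `n = 1`, and
`1 - q` is not a zero divisor in `ℤ[q]⟦t⟧`.
-/

/-- The `q`-integer `[m]_q = 1 + q + ⋯ + q^{m-1}` as a polynomial in `q`. -/
noncomputable def qint (m : ℕ) : Polynomial ℤ := ∑ i ∈ Finset.range m, Polynomial.X ^ i

open Finset

section QPochhammer

variable {S : Type*} [CommRing S]

def qPochhammer (x q : S) (m : ℕ) : S := ∏ i ∈ range m, (1 - x * q ^ i)

theorem qPochhammer_zero (x q : S) : qPochhammer x q 0 = 1 := prod_range_zero _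

theorem qPochhammer_succ (x q : S) (m : ℕ) :
    qPochhammer x q (m + 1) = qPochhammer x q m * (1 - x * q ^ m) :=
  prod_range_succ _ _

theorem qPochhammer_succ' (x q : S) (m : ℕ) :
    qPochhammer x q (m + 1) = (1 - x) * qPochhammer (x * q) q m := by
  simp only [qPochhammer, prod_range_succ', pow_succ, pow_zero, mul_one, mul_assoc, mul_comm]

theorem map_qPochhammer {T : Type*} [CommRing T] (f : S →+* T) (x q : S) (m : ℕ) :
    f (qPochhammer x q m) = qPochhammer (f x) (f q) m := by
  simp [qPochhammer, map_prod]

/-- With `u = q^k` and `m = n + 1 - 2k`, this is the coefficient of `a_{n,k} t^{k-1}` in the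
recurrence of the gamma sums. -/
theorem qPochhammer_gamma_step (u t q : S) (m : ℕ) :
    (1 - u ^ 2 * q ^ m * t) * qPochhammer (-(u * t)) q m -
        u * (1 - t) * qPochhammer (-(u * t) * q) q m =
      (1 - u) * qPochhammer (-(u * t)) q (m + 1) +
        (1 + u) * u * (1 - q ^ m) * t * qPochhammer (-(u * t) * q) q (m - 1) := by
  cases m with
  | zero => simp only [qPochhammer_succ, qPochhammer_zero]; ring
  | succ m =>
    rw [qPochhammer_succ' (-(u * t)) q (m + 1), qPochhammer_succ' (-(u * t)) q m,
      qPochhammer_succ _ _ m, Nat.add_sub_cancel]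
    ring

end QPochhammer

theorem PowerSeries.rescale_C {R : Type*} [CommSemiring R] (a c : R) :
    rescale a (C c) = C c := by
  ext n
  cases n <;> simp [coeff_rescale, coeff_C]

open scoped Polynomial

theorem one_sub_X_mul_qint (m : ℕ) : (1 - Polynomial.X) * qint m = 1 - Polynomial.X ^ m :=
  mul_neg_geom_sum _ _

structure GammaRecurrence (a : ℕ → ℕ → ℤ[X]) : Prop where
  eq_zero : ∀ n k, 1 ≤ n → (k = 0 ∨ (n + 1) / 2 < k) → a n k = 0
  recurrence : ∀ n k, 2 ≤ n → 1 ≤ k → k ≤ (n + 1) / 2 →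
    a n k = qint k * a (n - 1) k +
      (1 + Polynomial.X ^ (k - 1)) * Polynomial.X ^ (k - 1) * qint (n + 2 - 2 * k) *
        a (n - 1) (k - 1)

section Carlitz

open PowerSeries

local notation "q" => (Polynomial.X : ℤ[X])
local notation "Q" => (C q : ℤ[X]⟦X⟧)

noncomputable def carlitzStep (n : ℕ) : ℤ[X]⟦X⟧ →+ ℤ[X]⟦X⟧ :=
  AddMonoidHom.mulLeft (1 - Q ^ (n + 1) * X) -
    (AddMonoidHom.mulLeft (Q * (1 - X))).comp (rescale q).toAddMonoidHom

theorem carlitzStep_apply (n : ℕ) (f : ℤ[X]⟦X⟧) :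
    carlitzStep n f = (1 - Q ^ (n + 1) * X) * f - Q * (1 - X) * rescale q f := by
  simp [carlitzStep, mul_assoc]

theorem C_one_sub_X_ne_zero : (C (1 - q) : ℤ[X]⟦X⟧) ≠ 0 := by
  rw [Ne, map_eq_zero_iff _ C_injective, sub_eq_zero]
  exact fun h => Polynomial.X_ne_C 1 h.symm

noncomputable def carlitzSeries (n : ℕ) : ℤ[X]⟦X⟧ :=
  mk (fun j => qint (j + 1) ^ n) * qPochhammer X Q (n + 1)

theorem prod_one_sub_C_mul_X_eq_qPochhammer (m : ℕ) :
    ∏ i ∈ range m, (1 - C (q ^ i) * X) = qPochhammer (X : ℤ[X]⟦X⟧) Q m := by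
  simp only [qPochhammer, map_pow, mul_comm]

theorem carlitzSeries_zero : carlitzSeries 0 = 1 := by
  rw [carlitzSeries, qPochhammer_succ, qPochhammer_zero]
  simp only [pow_zero, mul_one, one_mul]
  exact mk_one_mul_one_sub_eq_one _

theorem carlitzSeries_succ (n : ℕ) :
    C (1 - q) * carlitzSeries (n + 1) = carlitzStep n (carlitzSeries n) := by
  have hmk : C (1 - q) * mk (fun j => qint (j + 1) ^ (n + 1)) =
      mk (fun j => qint (j + 1) ^ n) - Q * rescale q (mk fun j => qint (j + 1) ^ n) := by
    ext j : 1
    rw [coeff_C_mul, map_sub, coeff_C_mul, rescale_mk, coeff_mk, coeff_mk, coeff_mk]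
    linear_combination qint (j + 1) ^ n * one_sub_X_mul_qint (j + 1)
  have hpoch : rescale q (qPochhammer X Q (n + 1)) = qPochhammer (X * Q) Q (n + 1) := by
    rw [map_qPochhammer, rescale_X, rescale_C, mul_comm]
  rw [carlitzStep_apply, carlitzSeries, carlitzSeries, map_mul, hpoch, ← mul_assoc, hmk]
  linear_combination (mk fun j => qint (j + 1) ^ n) * qPochhammer_succ X Q (n + 1) -
    (Q * rescale q (mk fun j => qint (j + 1) ^ n)) * qPochhammer_succ' X Q (n + 1)

theorem carlitzSeries_one : carlitzSeries 1 = 1 := by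
  apply mul_left_cancel₀ C_one_sub_X_ne_zero
  rw [carlitzSeries_succ, carlitzSeries_zero, carlitzStep_apply, map_one, map_sub, map_one]
  ring

/-- The summand of index `k + 1` of the gamma expansion; the shift keeps truncated subtraction out
of the exponent of `t`. -/
noncomputable def gammaTerm (c : ℤ[X]) (k m : ℕ) : ℤ[X]⟦X⟧ :=
  C c * X ^ k * qPochhammer (-(Q ^ (k + 1) * X)) Q m

theorem gammaTerm_zero (k m : ℕ) : gammaTerm 0 k m = 0 := by
  simp [gammaTerm]

theorem gammaTerm_add (b c : ℤ[X]) (k m : ℕ) :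
    gammaTerm (b + c) k m = gammaTerm b k m + gammaTerm c k m := by
  simp only [gammaTerm, map_add, add_mul]

theorem C_mul_gammaTerm (b c : ℤ[X]) (k m : ℕ) :
    C b * gammaTerm c k m = gammaTerm (b * c) k m := by
  simp only [gammaTerm, map_mul, mul_assoc]

theorem rescale_gammaTerm (c : ℤ[X]) (k m : ℕ) :
    rescale q (gammaTerm c k m) =
      Q ^ k * C c * X ^ k * qPochhammer (-(Q ^ (k + 1) * X) * Q) Q m := by
  simp only [gammaTerm, map_mul, map_pow, map_neg, map_qPochhammer, rescale_C, rescale_X]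
  rw [show -(Q ^ (k + 1) * (Q * X)) = -(Q ^ (k + 1) * X) * Q by ring]
  ring

theorem gammaTerm_step (c : ℤ[X]) {k n : ℕ} (h : 2 * k + 1 ≤ n) :
    carlitzStep n (gammaTerm c k (n + 1 - 2 * (k + 1))) =
      gammaTerm ((1 - q ^ (k + 1)) * c) k (n - 2 * k) +
        gammaTerm ((1 + q ^ (k + 1)) * q ^ (k + 1) * (1 - q ^ (n + 1 - 2 * (k + 1))) * c)
          (k + 1) (n - 2 * (k + 1)) := by
  obtain ⟨m, rfl⟩ : ∃ m, n = 2 * k + 1 + m := ⟨n - (2 * k + 1), by omega⟩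
  rw [show 2 * k + 1 + m + 1 - 2 * (k + 1) = m by omega,
    show 2 * k + 1 + m - 2 * k = m + 1 by omega,
    show 2 * k + 1 + m - 2 * (k + 1) = m - 1 by omega, carlitzStep_apply, rescale_gammaTerm]
  have key := qPochhammer_gamma_step (Q ^ (k + 1)) X Q m
  simp only [gammaTerm, map_mul, map_sub, map_add, map_one, map_pow] at key ⊢
  rw [show -(Q ^ (k + 1 + 1) * X) = -(Q ^ (k + 1) * X) * Q by ring]
  linear_combination (C c * X ^ k) * key

noncomputable def gammaSeries (a : ℕ → ℕ → ℤ[X]) (n : ℕ) : ℤ[X]⟦X⟧ :=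
  ∑ k ∈ range ((n + 1) / 2), gammaTerm (a n (k + 1)) k (n + 1 - 2 * (k + 1))

theorem gammaSeries_eq_coe (a : ℕ → ℕ → ℤ[X]) (n : ℕ) :
    gammaSeries a n =
      ((∑ k ∈ Icc 1 ((n + 1) / 2), Polynomial.C (a n k) * Polynomial.X ^ (k - 1) *
        ∏ i ∈ range (n + 1 - 2 * k), (1 + Polynomial.C (q ^ (k + i)) * Polynomial.X) :
          ℤ[X][X]) : ℤ[X]⟦X⟧) := by
  rw [← Ico_add_one_right_eq_Icc, ← zero_add 1, ← sum_Ico_add', zero_add, ← range_eq_Ico,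
    ← Polynomial.coeToPowerSeries.ringHom_apply, map_sum]
  refine sum_congr rfl fun k _ => ?_
  simp only [map_mul, map_pow, map_prod, map_add, map_one,
    Polynomial.coeToPowerSeries.ringHom_apply, Polynomial.coe_C, Polynomial.coe_X,
    Nat.add_sub_cancel, gammaTerm, qPochhammer, pow_add]
  congr 1
  exact prod_congr rfl fun i _ => by ring

variable {a : ℕ → ℕ → ℤ[X]}

theorem gammaSeries_eq_sum_range {n N : ℕ} (h : ∀ k, (n + 1) / 2 < k → a n k = 0)
    (hN : (n + 1) / 2 ≤ N) :
    gammaSeries a n = ∑ k ∈ range N, gammaTerm (a n (k + 1)) k (n + 1 - 2 * (k + 1)) := by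
  refine sum_subset (range_subset_range.mpr hN) fun k _ hk => ?_
  rw [h (k + 1) (by simp at hk; omega), gammaTerm_zero]

theorem gammaSeries_one (ha11 : a 1 1 = 1) : gammaSeries a 1 = 1 := by
  simp [gammaSeries, gammaTerm, ha11, qPochhammer_zero]

/-- Outside `1 ≤ k + 1 ≤ (n + 2) / 2` both sides vanish: either `a n k = 0` or
`n + 1 - 2k = 0`. -/
theorem GammaRecurrence.one_sub_X_mul_succ (ha : GammaRecurrence a) {n : ℕ} (hn : 1 ≤ n)
    (k : ℕ) :
    (1 - q) * a (n + 1) (k + 1) =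
      (1 - q ^ (k + 1)) * a n (k + 1) +
        (1 + q ^ k) * q ^ k * (1 - q ^ (n + 1 - 2 * k)) * a n k := by
  rcases le_or_gt (k + 1) ((n + 2) / 2) with hk | hk
  · rw [ha.recurrence (n + 1) (k + 1) (by omega) (by omega) hk, Nat.add_sub_cancel,
      Nat.add_sub_cancel, show n + 1 + 2 - 2 * (k + 1) = n + 1 - 2 * k by omega]
    linear_combination a n (k + 1) * one_sub_X_mul_qint (k + 1) +
      (1 + q ^ k) * q ^ k * a n k * one_sub_X_mul_qint (n + 1 - 2 * k)
  · rw [ha.eq_zero (n + 1) (k + 1) (by omega) (Or.inr (by omega)),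
      ha.eq_zero n (k + 1) hn (Or.inr (by omega))]
    rcases le_or_gt k ((n + 1) / 2) with hkn | hkn
    · rw [show n + 1 - 2 * k = 0 by omega]
      ring
    · rw [ha.eq_zero n k hn (Or.inr hkn)]
      ring

theorem gammaSeries_succ (ha : GammaRecurrence a) {n : ℕ} (hn : 1 ≤ n) :
    C (1 - q) * gammaSeries a (n + 1) = carlitzStep n (gammaSeries a n) := by
  -- the contribution of `a n k` to `(1 - q) a (n + 1) (k + 1)`, which is reindexed below
  let V (k : ℕ) :=
    gammaTerm ((1 + q ^ k) * q ^ k * (1 - q ^ (n + 1 - 2 * k)) * a n k) k (n - 2 * k)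
  have hV0 : V 0 = 0 := by simp [V, ha.eq_zero n 0 hn (Or.inl rfl), gammaTerm_zero]
  have hVN : V (n + 1) = 0 := by
    simp [V, ha.eq_zero n (n + 1) hn (Or.inr (by omega)), gammaTerm_zero]
  have hlhs : C (1 - q) * gammaSeries a (n + 1) = ∑ k ∈ range (n + 1),
      (gammaTerm ((1 - q ^ (k + 1)) * a n (k + 1)) k (n - 2 * k) + V k) := by
    rw [gammaSeries_eq_sum_range (N := n + 1)
      (fun k hk => ha.eq_zero _ _ (by omega) (Or.inr hk)) (by omega), mul_sum]
    refine sum_congr rfl fun k _ => ?_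
    rw [C_mul_gammaTerm, ha.one_sub_X_mul_succ hn, gammaTerm_add,
      show n + 1 + 1 - 2 * (k + 1) = n - 2 * k by omega]
  have hrhs : carlitzStep n (gammaSeries a n) = ∑ k ∈ range (n + 1),
      (gammaTerm ((1 - q ^ (k + 1)) * a n (k + 1)) k (n - 2 * k) + V (k + 1)) := by
    rw [gammaSeries_eq_sum_range (N := n + 1)
      (fun k hk => ha.eq_zero _ _ hn (Or.inr hk)) (by omega), map_sum]
    refine sum_congr rfl fun k _ => ?_
    by_cases hk : 2 * k + 1 ≤ n
    · exact gammaTerm_step _ hk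
    · simp [V, ha.eq_zero n (k + 1) hn (Or.inr (by omega)), gammaTerm_zero]
  have hshift : ∑ k ∈ range (n + 1), V (k + 1) = ∑ k ∈ range (n + 1), V k := by
    rw [← add_zero (∑ k ∈ range (n + 1), V (k + 1)), ← hV0, ← sum_range_succ',
      sum_range_succ, hVN, add_zero]
  rw [hlhs, hrhs, sum_add_distrib, sum_add_distrib, hshift]

theorem gammaSeries_eq_carlitzSeries (ha : GammaRecurrence a) (ha11 : a 1 1 = 1) {n : ℕ}
    (hn : 1 ≤ n) : gammaSeries a n = carlitzSeries n := by
  induction n, hn using Nat.le_induction with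
  | base => rw [gammaSeries_one ha11, carlitzSeries_one]
  | succ n hn ih =>
    refine mul_left_cancel₀ C_one_sub_X_ne_zero ?_
    rw [gammaSeries_succ ha hn, ih, carlitzSeries_succ]

end Carlitz

/-- With `a_{n,k}(q)` defined by the recurrence
`a_{n,k}(q) = [k]_q a_{n-1,k}(q) + (1+q^{k-1}) q^{k-1} [n+2-2k]_q a_{n-1,k-1}(q)`
for `n ≥ 2`, `1 ≤ k ≤ ⌊(n+1)/2⌋`, `a_{1,1}(q) = 1`, and `a_{n,k}(q) = 0` for
`k ≤ 0` or `k > ⌊(n+1)/2⌋`, Carlitz's q-Eulerian polynomials (defined by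
`∑_{j≥0}[j+1]_q^n t^j = A_n(t,q)/(t;q)_{n+1}`) satisfy
`A_n(t,q) = ∑_{k=1}^{⌊(n+1)/2⌋} a_{n,k}(q) t^{k-1} (-tq^k;q)_{n+1-2k}`. -/
theorem carlitz_qEulerian_gamma_expansion
    (A : ℕ → Polynomial (Polynomial ℤ))
    (hA : ∀ n, ((A n : PowerSeries (Polynomial ℤ)) =
      PowerSeries.mk (fun j => (qint (j + 1)) ^ n) *
        ∏ i ∈ Finset.range (n + 1),
          (1 - PowerSeries.C (R := Polynomial ℤ) (Polynomial.X ^ i) * PowerSeries.X)))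
    (a : ℕ → ℕ → Polynomial ℤ)
    (ha11 : a 1 1 = 1)
    (ha0 : ∀ n k, 1 ≤ n → (k = 0 ∨ (n + 1) / 2 < k) → a n k = 0)
    (harec : ∀ n k, 2 ≤ n → 1 ≤ k → k ≤ (n + 1) / 2 →
      a n k = qint k * a (n - 1) k +
        (1 + Polynomial.X ^ (k - 1)) * Polynomial.X ^ (k - 1) * qint (n + 2 - 2 * k) *
          a (n - 1) (k - 1)) :
    ∀ n, 1 ≤ n →
      A n = ∑ k ∈ Finset.Icc 1 ((n + 1) / 2),
        Polynomial.C (a n k) * Polynomial.X ^ (k - 1) *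
          ∏ i ∈ Finset.range (n + 1 - 2 * k),
            ((1 + Polynomial.C ((Polynomial.X : Polynomial ℤ) ^ (k + i)) * Polynomial.X : Polynomial (Polynomial ℤ))) := by
  intro n hn
  rw [← Polynomial.coe_inj, hA n, ← gammaSeries_eq_coe,
    gammaSeries_eq_carlitzSeries ⟨ha0, harec⟩ ha11 hn, carlitzSeries,
    prod_one_sub_C_mul_X_eq_qPochhammer]
end

section
/- Define polynomials b_{n,k}(q) by b_{n,k}(q) = [2k+1]_q b_{n-1,k}(q) + (1+q)(1+q^{2k-1}) q^{2k-1} [n+1-2k]_{q^2} b_{n-1,k-1}(q) for n ≥ 2 and 0 ≤ k ≤ ⌊n/2⌋, with b_{1,0}(q) = 1 and b_{n,k}(q) = 0 for k < 0 or k > ⌊n/2⌋. Then Chow–Gessel's type B q-Eulerian polynomials satisfy B_n(t,q) = sum_{k=0}^{⌊n/2⌋} b_{n,k}(q) t^k (-tq^{2k+1}; q^2)_{n-2k}. -/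
/-- The `q²`-integer `[m]_{q²} = 1 + q² + ⋯ + q^{2(m-1)}` as a polynomial in `q`. -/
noncomputable def qint2 (m : ℕ) : Polynomial ℤ := ∑ i ∈ Finset.range m, Polynomial.X ^ (2 * i)

/-!
Write `S_n(t) = ∑_j [2j+1]_q^n t^j` and `σ f(t) = f(q²t)`. Since `(1-q)[2j+1]_q = 1 - q (q²)^j`,
`(1-q) S_{n+1} = S_n - q σ S_n`; combined with
`(t;q²)_{n+2} = (t;q²)_{n+1} (1 - q^{2n+2} t) = (1 - t) σ (t;q²)_{n+1}` this gives
`(1-q) B_{n+1} = (1 - q^{2n+2} t) B_n - q (1 - t) σ B_n`.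

The gamma expansion obeys the same recurrence. Multiplying the recurrence of `b_{n,k}` by `1-q`
turns its coefficients into `1 - q^{2k+1}` and `(1 + q^{2k-1}) (q^{2k-1} - q^{2n-2k+3})`, and these
are exactly the coefficients with which `f ↦ (1 - q^{2n+2} t) f - q (1 - t) σ f` sends
`t^k (-tq^{2k+1};q²)_{n-2k}` to a combination of `t^k (-tq^{2k+1};q²)_{n+1-2k}` and
`t^{k+1} (-tq^{2k+3};q²)_{n-1-2k}`. Both sides are `1 + qt` for `n = 1`, and `1 - q` is not a zero
divisor, so they agree for all `n ≥ 1`.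
-/

open Finset

namespace PowerSeries

theorem rescale_C_s15 {R : Type*} [CommSemiring R] (a r : R) : rescale a (C r) = C r := by
  ext n
  cases n <;> simp [coeff_C]

end PowerSeries

namespace ChowGessel

section Series

open PowerSeries

variable {R : Type*} [CommRing R] (q : R)

noncomputable def oddQIntPowSeries (n : ℕ) : R⟦X⟧ :=
  mk fun j => (∑ i ∈ range (2 * j + 1), q ^ i) ^ n

/-- `(t; q²)_n`, with `X` playing the role of `t`. -/
noncomputable def qPochhammer (n : ℕ) : R⟦X⟧ :=
  ∏ i ∈ range n, (1 - C (q ^ (2 * i)) * X)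

/-- `(-t q^e; q²)_m`. -/
noncomputable def negQPochhammer (e m : ℕ) : R⟦X⟧ :=
  ∏ i ∈ range m, (1 + C (q ^ (e + 2 * i)) * X)

noncomputable def eulerBSeries (n : ℕ) : R⟦X⟧ :=
  oddQIntPowSeries q n * qPochhammer q (n + 1)

noncomputable def eulerBStep (n : ℕ) (f : R⟦X⟧) : R⟦X⟧ :=
  (1 - C (q ^ (2 * (n + 1))) * X) * f - C q * (1 - X) * rescale (q ^ 2) f

lemma C_one_sub_mul_oddQIntPowSeries_succ (n : ℕ) :
    C (1 - q) * oddQIntPowSeries q (n + 1) =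
      oddQIntPowSeries q n - C q * rescale (q ^ 2) (oddQIntPowSeries q n) := by
  ext j
  rw [coeff_C_mul, map_sub, coeff_C_mul, coeff_rescale]
  simp only [oddQIntPowSeries, coeff_mk]
  have hgeom : (1 - q) * ∑ i ∈ range (2 * j + 1), q ^ i = 1 - q * (q ^ 2) ^ j := by
    rw [mul_neg_geom_sum, ← pow_mul, ← pow_succ']
  linear_combination (∑ i ∈ range (2 * j + 1), q ^ i) ^ n * hgeom

lemma qPochhammer_succ_eq_one_sub_X_mul_rescale (n : ℕ) :
    qPochhammer q (n + 1) = (1 - X) * rescale (q ^ 2) (qPochhammer q n) := by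
  unfold qPochhammer
  rw [prod_range_succ', mul_comm, map_prod]
  congr 1
  · simp
  · refine prod_congr rfl fun i _ => ?_
    rw [map_sub, map_one, map_mul, rescale_C_s15, rescale_X, ← mul_assoc, ← map_mul, ← pow_add,
      mul_add_one]

lemma eulerBSeries_zero : eulerBSeries q 0 = 1 := by
  ext j
  cases j <;> simp [eulerBSeries, oddQIntPowSeries, qPochhammer, mul_sub, coeff_succ_mul_X]

lemma C_one_sub_mul_eulerBSeries_succ (n : ℕ) :
    C (1 - q) * eulerBSeries q (n + 1) = eulerBStep q n (eulerBSeries q n) := by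
  have hpoch : qPochhammer q (n + 2) = qPochhammer q (n + 1) * (1 - C (q ^ (2 * (n + 1))) * X) :=
    prod_range_succ _ _
  simp only [eulerBSeries, eulerBStep, map_mul]
  linear_combination qPochhammer q (n + 2) * C_one_sub_mul_oddQIntPowSeries_succ q n
    + oddQIntPowSeries q n * hpoch
    - C q * rescale (q ^ 2) (oddQIntPowSeries q n) *
      qPochhammer_succ_eq_one_sub_X_mul_rescale q (n + 1)

lemma negQPochhammer_succ (e m : ℕ) :
    negQPochhammer q e (m + 1) = negQPochhammer q e m * (1 + C (q ^ (e + 2 * m)) * X) :=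
  prod_range_succ _ _

lemma negQPochhammer_succ' (e m : ℕ) :
    negQPochhammer q e (m + 1) = (1 + C (q ^ e) * X) * negQPochhammer q (e + 2) m := by
  unfold negQPochhammer
  rw [prod_range_succ', mul_comm, mul_zero, add_zero]
  congr 1
  refine prod_congr rfl fun i _ => ?_
  rw [mul_add_one, ← add_assoc, add_right_comm]

lemma rescale_negQPochhammer (e m : ℕ) :
    rescale (q ^ 2) (negQPochhammer q e m) = negQPochhammer q (e + 2) m := by
  unfold negQPochhammer
  rw [map_prod]
  refine prod_congr rfl fun i _ => ?_
  rw [map_add, map_one, map_mul, rescale_C_s15, rescale_X, ← mul_assoc, ← map_mul, ← pow_add,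
    add_right_comm]

noncomputable def gammaTerm (n k : ℕ) : R⟦X⟧ :=
  X ^ k * negQPochhammer q (2 * k + 1) (n - 2 * k)

lemma eulerBStep_gammaTerm (n k : ℕ) (hk : 2 * k ≤ n) :
    eulerBStep q n (gammaTerm q n k) =
      C (1 - q ^ (2 * k + 1)) * gammaTerm q (n + 1) k +
        C ((1 + q ^ (2 * k + 1)) * (q ^ (2 * k + 1) - q ^ (2 * (n - k) + 1))) *
          gammaTerm q (n + 1) (k + 1) := by
  obtain ⟨m, rfl⟩ := Nat.exists_eq_add_of_le hk
  have hσ : rescale (q ^ 2) (gammaTerm q (2 * k + m) k) =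
      C (q ^ (2 * k)) * X ^ k * negQPochhammer q (2 * k + 3) m := by
    rw [gammaTerm, map_mul, map_pow, rescale_X, rescale_negQPochhammer, mul_pow, ← map_pow,
      ← pow_mul, Nat.add_sub_cancel_left]
  rw [eulerBStep, hσ]
  rcases m with _ | m
  · simp only [gammaTerm, negQPochhammer, Nat.add_sub_cancel_left,
      show 2 * k + 0 + 1 - 2 * k = 1 by omega, show 2 * k + 0 + 1 - 2 * (k + 1) = 0 by omega,
      show 2 * (2 * k + 0 - k) + 1 = 2 * k + 1 by omega, range_zero, prod_empty, range_one,
      prod_singleton]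
    simp only [map_mul, map_sub, map_add, map_one, map_pow]
    ring
  · have hn : gammaTerm q (2 * k + (m + 1)) k =
        X ^ k * ((1 + C (q ^ (2 * k + 1)) * X) * negQPochhammer q (2 * k + 3) m) := by
      rw [gammaTerm, Nat.add_sub_cancel_left, negQPochhammer_succ']
    have hn1 : gammaTerm q (2 * k + (m + 1) + 1) k =
        X ^ k * ((1 + C (q ^ (2 * k + 1)) * X) * negQPochhammer q (2 * k + 3) (m + 1)) := by
      rw [gammaTerm, show 2 * k + (m + 1) + 1 - 2 * k = m + 1 + 1 by omega,
        negQPochhammer_succ']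
    have hn1' : gammaTerm q (2 * k + (m + 1) + 1) (k + 1) =
        X ^ (k + 1) * negQPochhammer q (2 * k + 3) m := by
      rw [gammaTerm, show 2 * k + (m + 1) + 1 - 2 * (k + 1) = m by omega,
        show 2 * (k + 1) + 1 = 2 * k + 3 by ring]
    rw [hn, hn1, hn1', negQPochhammer_succ,
      show 2 * (2 * k + (m + 1) - k) + 1 = 2 * k + 3 + 2 * m by omega]
    simp only [map_mul, map_sub, map_add, map_one, map_pow]
    ring

noncomputable def gammaSeries (b : ℕ → ℕ → R) (n : ℕ) : R⟦X⟧ :=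
  ∑ k ∈ range (n / 2 + 1), C (b n k) * gammaTerm q n k

lemma gammaSeries_eq_sum_range (b : ℕ → ℕ → R) {n N : ℕ} (hN : n / 2 + 1 ≤ N)
    (hb : ∀ k, n / 2 < k → b n k = 0) :
    gammaSeries q b n = ∑ k ∈ range N, C (b n k) * gammaTerm q n k :=
  sum_subset (range_subset_range.mpr hN) fun k _ hk => by
    rw [hb k (by simpa using hk), map_zero, zero_mul]

lemma eulerBStep_sum_C_mul (n : ℕ) (s : Finset ℕ) (c : ℕ → R) (f : ℕ → R⟦X⟧) :
    eulerBStep q n (∑ k ∈ s, C (c k) * f k) = ∑ k ∈ s, C (c k) * eulerBStep q n (f k) := by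
  simp only [eulerBStep, map_sum, map_mul, rescale_C_s15, mul_sum, ← sum_sub_distrib]
  exact sum_congr rfl fun k _ => by ring

lemma C_one_sub_mul_gammaSeries_succ (b : ℕ → ℕ → R) (n : ℕ)
    (hbn : ∀ k, n / 2 < k → b n k = 0) (hbn1 : ∀ k, (n + 1) / 2 < k → b (n + 1) k = 0)
    (hb_zero : b (n + 1) 0 = b n 0)
    (hb_succ : ∀ k, (1 - q) * b (n + 1) (k + 1) =
      (1 - q ^ (2 * (k + 1) + 1)) * b n (k + 1) +
        (1 + q ^ (2 * k + 1)) * (q ^ (2 * k + 1) - q ^ (2 * (n - k) + 1)) * b n k) :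
    C (1 - q) * gammaSeries q b (n + 1) = eulerBStep q n (gammaSeries q b n) := by
  set N := n / 2 + 1
  have hterm : ∀ k, C (b n k) * eulerBStep q n (gammaTerm q n k) =
      C ((1 - q ^ (2 * k + 1)) * b n k) * gammaTerm q (n + 1) k +
        C ((1 + q ^ (2 * k + 1)) * (q ^ (2 * k + 1) - q ^ (2 * (n - k) + 1)) * b n k) *
          gammaTerm q (n + 1) (k + 1) := by
    intro k
    rcases le_or_gt (2 * k) n with hk | hk
    · rw [eulerBStep_gammaTerm q n k hk]
      simp only [map_mul]
      ring
    · simp [hbn k (by omega)]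
  rw [gammaSeries_eq_sum_range q b (N := N + 1) (by omega) hbn1,
    gammaSeries_eq_sum_range q b (N := N + 1) (by omega) hbn, eulerBStep_sum_C_mul,
    sum_congr rfl fun k _ => hterm k, sum_add_distrib, mul_sum, sum_range_succ' _ N,
    sum_range_succ' (fun k => C ((1 - q ^ (2 * k + 1)) * b n k) * gammaTerm q (n + 1) k) N,
    sum_range_succ (fun k => C ((1 + q ^ (2 * k + 1)) *
      (q ^ (2 * k + 1) - q ^ (2 * (n - k) + 1)) * b n k) * gammaTerm q (n + 1) (k + 1)) N,
    hbn N (by omega)]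
  simp only [← mul_assoc, ← map_mul, hb_succ, hb_zero, map_add, add_mul, sum_add_distrib,
    mul_zero, zero_add, pow_one, map_zero, zero_mul, add_zero]
  ring

lemma gammaSeries_one (b : ℕ → ℕ → R) (hb10 : b 1 0 = 1) :
    gammaSeries q b 1 = 1 + C q * X := by
  simp [gammaSeries, gammaTerm, negQPochhammer, hb10]

lemma C_one_sub_ne_zero (hq : q ≠ 1) : C (1 - q) ≠ 0 :=
  (map_ne_zero_iff _ C_injective).mpr (sub_ne_zero.mpr hq.symm)

lemma eulerBSeries_one [IsDomain R] (hq : q ≠ 1) : eulerBSeries q 1 = 1 + C q * X := by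
  refine mul_left_cancel₀ (C_one_sub_ne_zero q hq) ?_
  rw [C_one_sub_mul_eulerBSeries_succ, eulerBSeries_zero, eulerBStep]
  simp only [map_one, map_sub, map_pow]
  ring

theorem gammaSeries_eq_eulerBSeries [IsDomain R] (hq : q ≠ 1) (b : ℕ → ℕ → R)
    (hb10 : b 1 0 = 1) (hb0 : ∀ n k, 1 ≤ n → n / 2 < k → b n k = 0)
    (hb_zero : ∀ n, 1 ≤ n → b (n + 1) 0 = b n 0)
    (hb_succ : ∀ n, 1 ≤ n → ∀ k, (1 - q) * b (n + 1) (k + 1) =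
      (1 - q ^ (2 * (k + 1) + 1)) * b n (k + 1) +
        (1 + q ^ (2 * k + 1)) * (q ^ (2 * k + 1) - q ^ (2 * (n - k) + 1)) * b n k)
    {n : ℕ} (hn : 1 ≤ n) : gammaSeries q b n = eulerBSeries q n := by
  induction n, hn using Nat.le_induction with
  | base => rw [gammaSeries_one q b hb10, eulerBSeries_one q hq]
  | succ n hn ih =>
    refine mul_left_cancel₀ (C_one_sub_ne_zero q hq) ?_
    rw [C_one_sub_mul_gammaSeries_succ q b n (hb0 n · hn) (hb0 (n + 1) · (by omega))
      (hb_zero n hn) (hb_succ n hn), ih, C_one_sub_mul_eulerBSeries_succ]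

end Series

open Polynomial in
lemma one_sub_X_mul_succ_succ_eq (b : ℕ → ℕ → ℤ[X])
    (hb0 : ∀ n k, 1 ≤ n → n / 2 < k → b n k = 0)
    (hbrec : ∀ n k, 2 ≤ n → 1 ≤ k → k ≤ n / 2 →
      b n k = qint (2 * k + 1) * b (n - 1) k +
        (1 + X) * (1 + X ^ (2 * k - 1)) * X ^ (2 * k - 1) * qint2 (n + 1 - 2 * k) *
          b (n - 1) (k - 1))
    {n : ℕ} (hn : 1 ≤ n) (k : ℕ) :
    (1 - X) * b (n + 1) (k + 1) =
      (1 - X ^ (2 * (k + 1) + 1)) * b n (k + 1) +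
        (1 + X ^ (2 * k + 1)) * (X ^ (2 * k + 1) - X ^ (2 * (n - k) + 1)) * b n k := by
  rcases le_or_gt (2 * k + 1) n with hk | hk
  · have hrec := hbrec (n + 1) (k + 1) (by omega) (by omega) (by omega)
    rw [Nat.add_sub_cancel, Nat.add_sub_cancel, show 2 * (k + 1) - 1 = 2 * k + 1 by omega,
      show n + 1 + 1 - 2 * (k + 1) = n - 2 * k by omega] at hrec
    have hqint : (1 - X) * qint (2 * (k + 1) + 1) = 1 - X ^ (2 * (k + 1) + 1) :=
      mul_neg_geom_sum _ _
    have hqint2 : (1 - X) * (1 + X) * qint2 (n - 2 * k) = 1 - X ^ (2 * (n - 2 * k)) := by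
      simp only [qint2, pow_mul]
      linear_combination mul_neg_geom_sum (X ^ 2 : ℤ[X]) (n - 2 * k)
    have hexp : (X : ℤ[X]) ^ (2 * k + 1) * X ^ (2 * (n - 2 * k)) = X ^ (2 * (n - k) + 1) := by
      rw [← pow_add]
      congr 1
      omega
    rw [hrec]
    linear_combination b n (k + 1) * hqint
      + (1 + X ^ (2 * k + 1)) * X ^ (2 * k + 1) * b n k * hqint2
      - (1 + X ^ (2 * k + 1)) * b n k * hexp
  · rw [hb0 (n + 1) (k + 1) (by omega) (by omega), hb0 n (k + 1) hn (by omega)]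
    obtain rfl | hk' : n = 2 * k ∨ n / 2 < k := by omega
    · rw [show 2 * (2 * k - k) + 1 = 2 * k + 1 by omega]
      ring
    · rw [hb0 n k hn hk']
      ring

end ChowGessel

/-- With `b_{n,k}(q)` defined by
`b_{n,k}(q) = [2k+1]_q b_{n-1,k}(q) + (1+q)(1+q^{2k-1}) q^{2k-1} [n+1-2k]_{q²} b_{n-1,k-1}(q)`
for `n ≥ 2`, `0 ≤ k ≤ ⌊n/2⌋` (the instance `k = 0` reading `b_{n,0} = b_{n-1,0}` since
`b_{n-1,-1} = 0`), with `b_{1,0}(q) = 1` and `b_{n,k}(q) = 0` for `k > ⌊n/2⌋`,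
Chow–Gessel's type B q-Eulerian polynomials, defined by
`∑_{j≥0} [2j+1]_q^n t^j = B_n(t,q)/(t;q²)_{n+1}`, satisfy
`B_n(t,q) = ∑_{k=0}^{⌊n/2⌋} b_{n,k}(q) t^k (-tq^{2k+1};q²)_{n-2k}`. -/
theorem chowGessel_qEulerianB_gamma_expansion
    (B : ℕ → Polynomial (Polynomial ℤ))
    (hB : ∀ n, ((B n : PowerSeries (Polynomial ℤ)) =
      PowerSeries.mk (fun j => (qint (2 * j + 1)) ^ n) *
        ∏ i ∈ Finset.range (n + 1),
          (1 - PowerSeries.C (R := Polynomial ℤ) (Polynomial.X ^ (2 * i)) * PowerSeries.X)))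
    (b : ℕ → ℕ → Polynomial ℤ)
    (hb10 : b 1 0 = 1)
    (hb0 : ∀ n k, 1 ≤ n → n / 2 < k → b n k = 0)
    (hbrec0 : ∀ n, 2 ≤ n → b n 0 = b (n - 1) 0)
    (hbrec : ∀ n k, 2 ≤ n → 1 ≤ k → k ≤ n / 2 →
      b n k = qint (2 * k + 1) * b (n - 1) k +
        (1 + Polynomial.X) * (1 + Polynomial.X ^ (2 * k - 1)) * Polynomial.X ^ (2 * k - 1) *
          qint2 (n + 1 - 2 * k) * b (n - 1) (k - 1)) :
    ∀ n, 1 ≤ n →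
      B n = ∑ k ∈ Finset.range (n / 2 + 1),
        Polynomial.C (b n k) * Polynomial.X ^ k *
          ∏ i ∈ Finset.range (n - 2 * k),
            ((1 + Polynomial.C ((Polynomial.X : Polynomial ℤ) ^ (2 * k + 1 + 2 * i)) *
              Polynomial.X : Polynomial (Polynomial ℤ))) := by
  intro n hn
  have hX : (Polynomial.X : Polynomial ℤ) ≠ 1 := by simpa using Polynomial.X_ne_C (1 : ℤ)
  have hgamma := ChowGessel.gammaSeries_eq_eulerBSeries Polynomial.X hX b hb10 hb0
    (fun m _ => by simpa using hbrec0 (m + 1) (by omega))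
    (fun _ hm => ChowGessel.one_sub_X_mul_succ_succ_eq b hb0 hbrec hm) hn
  apply Polynomial.coe_injective
  calc (B n : PowerSeries (Polynomial ℤ)) = ChowGessel.eulerBSeries Polynomial.X n := hB n
    _ = ChowGessel.gammaSeries Polynomial.X b n := hgamma.symm
    _ = _ := by
      rw [eq_comm, ← Polynomial.coeToPowerSeries.ringHom_apply]
      simp only [ChowGessel.gammaSeries, ChowGessel.gammaTerm, ChowGessel.negQPochhammer,
        map_sum, map_prod, map_mul, map_add, map_one, map_pow, mul_assoc,
        Polynomial.coeToPowerSeries.ringHom_apply, Polynomial.coe_C, Polynomial.coe_X]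
end
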